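/- Let n ≥ 3 and let a_1 ≤ a_2 ≤ ⋯ ≤ a_n be positive integers that are pairwise coprime (gcd(a_i, a_j) = 1 for all i ≠ j). Then every integer b > UB_2(a_1, a_2, a_3) can be written as a_1x_1 + ⋯ + a_nx_n with nonnegative integers x_1, …, x_n; that is, F(a_1, …, a_n) ≤ (1/2)(√(a_1a_2a_3(a_1 + a_2 + a_3)) − a_1 − a_2 − a_3). -/
import Mathlib

open Finset

section FrobeniusAux

/-- Sum of a finset of naturals is at least `card * (card - 1) / 2`. -/
lemma sum_ge_card (S : Finset ℕ) : S.card * (S.card - 1) ≤ 2 * ∑ s ∈ S, s := by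
  induction S using Finset.strongInduction with
  | _ S ih =>
    rcases S.eq_empty_or_nonempty with rfl | hne
    · simp
    · have hmax := S.max'_mem hne
      have hsub : S ⊆ Finset.range (S.max' hne + 1) := by
        intro x hx
        simp only [Finset.mem_range]
        exact Nat.lt_succ_of_le (S.le_max' x hx)
      have hcard : S.card ≤ S.max' hne + 1 := by
        simpa using Finset.card_le_card hsub
      have h1 := ih (S.erase (S.max' hne)) (Finset.erase_ssubset hmax)
      have hc : (S.erase (S.max' hne)).card = S.card - 1 :=
        Finset.card_erase_of_mem hmax
      have hs : ∑ s ∈ S, s = S.max' hne + ∑ s ∈ S.erase (S.max' hne), s :=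
        (Finset.add_sum_erase S id hmax).symm
      rw [hc] at h1
      obtain ⟨t, ht⟩ : ∃ t, S.card = t + 1 := ⟨S.card - 1, by
        have := Finset.card_pos.mpr hne; omega⟩
      rw [ht] at h1 ⊢
      simp only [Nat.add_sub_cancel] at h1 ⊢
      rcases t with _ | u
      · simp
      · have hm : u + 1 ≤ S.max' hne := by omega
        simp only [Nat.add_sub_cancel] at h1
        nlinarith [h1, hm, hs]

/-- A sum of distinct naturals below `b` is at most the sum of the largest ones. -/
lemma sum_distinct_le (b : ℕ) (S : Finset ℕ) (hS : S ⊆ Finset.range b) :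
    2 * ∑ s ∈ S, s ≤ S.card * (2 * b - S.card - 1) := by
  classical
  have hcard : S.card ≤ b := by simpa using Finset.card_le_card hS
  have hsplit : ∑ s ∈ Finset.range b \ S, s + ∑ s ∈ S, s = ∑ s ∈ Finset.range b, s :=
    Finset.sum_sdiff hS
  have hrange : (∑ s ∈ Finset.range b, s) * 2 = b * (b - 1) :=
    Finset.sum_range_id_mul_two b
  have hcomp := sum_ge_card (Finset.range b \ S)
  have hcompcard : (Finset.range b \ S).card = b - S.card := by
    rw [Finset.card_sdiff_of_subset hS, Finset.card_range]
  rw [hcompcard] at hcomp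
  rcases Nat.eq_zero_or_pos b with rfl | hb
  · interval_cases h : S.card <;> simp_all
  rcases Nat.eq_zero_or_pos S.card with hk | hk
  · rw [hk]
    have : S = ∅ := Finset.card_eq_zero.mp hk
    simp [this]
  -- now 1 ≤ S.card ≤ b, 1 ≤ b
  have h1 : S.card + 1 ≤ 2 * b := by omega
  have hd : b - S.card - 1 + 1 ≥ 0 := by omega
  rcases Nat.lt_or_ge S.card b with hlt | hge
  · -- d ≥ 1
    zify [hcard, hb, hk, h1, (by omega : 1 ≤ b - S.card),
      (by omega : S.card ≤ 2 * b), (by omega : 1 ≤ 2 * b - S.card)] at *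
    nlinarith [hcomp, hsplit, hrange]
  · have hkb : S.card = b := le_antisymm hcard hge
    have : 2 * b - S.card - 1 = b - 1 := by omega
    rw [this, hkb]
    calc 2 * ∑ s ∈ S, s ≤ 2 * (∑ s ∈ Finset.range b \ S, s + ∑ s ∈ S, s) := by omega
    _ = (∑ s ∈ Finset.range b, s) * 2 := by omega
    _ = b * (b-1) := hrange

section ZModSums
variable {b : ℕ} [NeZero b] (x y : ZMod b) (hy : IsUnit y)

private def g (x y : ZMod b) (j : ℕ) : ℕ := (x + (j : ZMod b) * y).val

include hy

lemma g_injOn (L : ℕ) (hL : L ≤ b) :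
    Set.InjOn (g x y) (Finset.range L) := by
  intro j1 h1 j2 h2 he
  simp only [Finset.coe_range, Set.mem_Iio] at h1 h2
  have he2 : x + (j1 : ZMod b) * y = x + (j2 : ZMod b) * y := ZMod.val_injective b he
  have he3 : (j1 : ZMod b) * y = (j2 : ZMod b) * y := by
    exact add_left_cancel he2
  have he4 : (j1 : ZMod b) = (j2 : ZMod b) := by
    have := congrArg (· * (↑hy.unit⁻¹ : ZMod b)) he3
    simpa [mul_assoc, IsUnit.unit_spec] using this
  have v1 : ((j1 : ZMod b)).val = j1 := ZMod.val_cast_of_lt (lt_of_lt_of_le h1 hL)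
  have v2 : ((j2 : ZMod b)).val = j2 := ZMod.val_cast_of_lt (lt_of_lt_of_le h2 hL)
  rw [← v1, ← v2, he4]

lemma g_partial_sum (L : ℕ) (hL : L ≤ b) :
    2 * ∑ j ∈ Finset.range L, g x y j ≤ L * (2 * b - L - 1) := by
  classical
  set S := (Finset.range L).image (g x y) with hS
  have hinj := g_injOn x y hy L hL
  have hsum : ∑ j ∈ Finset.range L, g x y j = ∑ s ∈ S, s := by
    rw [hS, Finset.sum_image (fun a ha b hb h => hinj (by simpa using ha) (by simpa using hb) h)]
  have hcard : S.card = L := by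
    rw [hS, Finset.card_image_of_injOn hinj, Finset.card_range]
  have hsub : S ⊆ Finset.range b := by
    intro s hs
    simp only [hS, Finset.mem_image] at hs
    obtain ⟨j, _, rfl⟩ := hs
    exact Finset.mem_range.mpr (ZMod.val_lt _)
  have := sum_distinct_le b S hsub
  rw [hcard, ← hsum] at this
  exact this

lemma g_full_sum : 2 * ∑ j ∈ Finset.range b, g x y j = b * (b - 1) := by
  classical
  set S := (Finset.range b).image (g x y) with hS
  have hinj := g_injOn x y hy b le_rfl
  have hsum : ∑ j ∈ Finset.range b, g x y j = ∑ s ∈ S, s := by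
    rw [hS, Finset.sum_image (fun a ha b hb h => hinj (by simpa using ha) (by simpa using hb) h)]
  have hcard : S.card = b := by
    rw [hS, Finset.card_image_of_injOn hinj, Finset.card_range]
  have hsub : S ⊆ Finset.range b := by
    intro s hs
    simp only [hS, Finset.mem_image] at hs
    obtain ⟨j, _, rfl⟩ := hs
    exact Finset.mem_range.mpr (ZMod.val_lt _)
  have hSeq : S = Finset.range b := Finset.eq_of_subset_of_card_le hsub (by rw [Finset.card_range, hcard])
  rw [hsum, hSeq, mul_comm]
  exact Finset.sum_range_id_mul_two b

lemma g_sum_le (L : ℕ) :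
    8 * ∑ j ∈ Finset.range L, g x y j ≤ 4 * L * (b - 1) + b ^ 2 := by
  induction L using Nat.strong_induction_on with
  | _ L ih =>
    rcases Nat.lt_or_ge L (b + 1) with hL | hL
    · -- L ≤ b
      have h := g_partial_sum x y hy L (by omega)
      have hla : 4 * (L * (2 * b - L - 1)) ≤ 4 * L * (b - 1) + b ^ 2 := by
        have hLb : L ≤ b := by omega
        rcases Nat.eq_zero_or_pos L with rfl | hLpos
        · simp
        have hb1 : 1 ≤ b := by omega
        zify [hLb, hb1, (by omega : L ≤ 2 * b), (by omega : 1 ≤ 2 * b - L)]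
        nlinarith [sq_nonneg ((b : ℤ) - 2 * L)]
      omega
    · -- L > b : split off first b terms
      have hb : 0 < b := Nat.pos_of_ne_zero (NeZero.ne b)
      have hsplit : ∑ j ∈ Finset.range b, g x y j + ∑ j ∈ Finset.Ico b L, g x y j
          = ∑ j ∈ Finset.range L, g x y j :=
        Finset.sum_range_add_sum_Ico _ (by omega)
      have hIco : ∑ j ∈ Finset.Ico b L, g x y j = ∑ i ∈ Finset.range (L - b), g x y (b + i) := by
        rw [Finset.sum_Ico_eq_sum_range]
      have hshift : ∀ i : ℕ, g x y (b + i) = g x y i := by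
        intro i
        unfold g
        push_cast
        rw [ZMod.natCast_self]
        ring_nf
      have hIco2 : ∑ i ∈ Finset.range (L - b), g x y (b + i)
          = ∑ i ∈ Finset.range (L - b), g x y i :=
        Finset.sum_congr rfl (fun i _ => hshift i)
      have hfull := g_full_sum x y hy
      have hih := ih (L - b) (by omega)
      have hgoal : 8 * ∑ j ∈ Finset.range L, g x y j
          = 8 * ∑ j ∈ Finset.range b, g x y j + 8 * ∑ i ∈ Finset.range (L - b), g x y i := by
        rw [← hsplit, hIco, hIco2]; ring
      rw [hgoal]
      have : 8 * ∑ j ∈ Finset.range b, g x y j = 4 * (b * (b-1)) := by omega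
      rw [this]
      have hexp : 4 * (b * (b - 1)) + (4 * (L - b) * (b - 1) + b ^ 2) = 4 * L * (b-1) + b ^ 2 := by
        have : L - b + b = L := by omega
        nlinarith [this]
      omega
end ZModSums

private lemma arith1 (a b c L M : ℤ) (hc : 0 < c) (hab : 1 ≤ a * b)
    (h1 : -c ≤ M - 2 * c * L) (h2 : M - 2 * c * L ≤ c)
    (hM : a * b * c * (a + b + c) < M ^ 2) :
    a * b * (a + b) < 4 * L * M - 4 * c * L ^ 2 := by
  have hsq : (M - 2 * c * L) ^ 2 ≤ c ^ 2 := sq_le_sq' h1 h2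
  have hkey2 : c * (4 * L * M - 4 * c * L ^ 2) = M ^ 2 - (M - 2 * c * L) ^ 2 := by ring
  have haux : c ^ 2 * 1 ≤ c ^ 2 * (a * b) := mul_le_mul_of_nonneg_left hab (by positivity)
  have h3 : c * (a * b * (a + b)) < c * (4 * L * M - 4 * c * L ^ 2) := by
    rw [hkey2]
    nlinarith [hsq, hM, haux]
  exact lt_of_mul_lt_mul_left h3 hc.le

private lemma arith2 (a b c L M N SP SQ SJ SK : ℤ)
    (ha : 0 < a) (hb : 0 < b)
    (hsum : a * b * SK = L * N - c * SJ - a * SP - b * SQ)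
    (hSK : SK ≤ -L)
    (hP8 : 8 * SP ≤ 4 * L * (b - 1) + b ^ 2)
    (hQ8 : 8 * SQ ≤ 4 * L * (a - 1) + a ^ 2)
    (hj2 : 2 * SJ = L * (L - 1))
    (hMZ : M = 2 * N + (a + b + c))
    (hH : a * b * (a + b) < 4 * L * M - 4 * c * L ^ 2) :
    False := by
  have haP : a * (8 * SP) ≤ a * (4 * L * (b - 1) + b ^ 2) :=
    mul_le_mul_of_nonneg_left hP8 (by positivity)
  have hbQ : b * (8 * SQ) ≤ b * (4 * L * (a - 1) + a ^ 2) :=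
    mul_le_mul_of_nonneg_left hQ8 (by positivity)
  have hcJ : 4 * c * (2 * SJ) = 4 * c * (L * (L - 1)) := by rw [hj2]
  have habL : a * b * SK ≤ a * b * (-L) :=
    mul_le_mul_of_nonneg_left hSK (by positivity)
  rw [hsum] at habL
  have hLM : 4 * L * M = 8 * L * N + 4 * L * a + 4 * L * b + 4 * L * c := by rw [hMZ]; ring
  nlinarith [haP, hbQ, hcJ, habL, hH, hLM]

lemma three_coprime_rep (a b c N : ℕ) (ha : 0 < a) (hb : 0 < b) (hc : 0 < c)
    (hab : Nat.Coprime a b) (hac : Nat.Coprime a c) (hbc : Nat.Coprime b c)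
    (h : (a * b * c) * (a + b + c) < (2 * N + (a + b + c)) ^ 2) :
    ∃ x y z : ℕ, N = a * x + b * y + c * z := by
  haveI : NeZero a := ⟨ha.ne'⟩
  haveI : NeZero b := ⟨hb.ne'⟩
  set M : ℕ := 2 * N + (a + b + c) with hM
  set L : ℕ := (M + c) / (2 * c) with hLdef
  have hc2 : 0 < 2 * c := by omega
  have hL1 : 2 * c * L ≤ M + c := by
    rw [hLdef, mul_comm]
    exact Nat.div_mul_le_self _ _
  have hL2 : M + c < 2 * c * L + 2 * c := by
    rw [hLdef]
    have h1 := Nat.div_add_mod (M + c) (2 * c)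
    have h2 := Nat.mod_lt (M + c) hc2
    omega
  -- units and sequences
  set ub : (ZMod b)ˣ := ZMod.unitOfCoprime a hab with hub
  set ua : (ZMod a)ˣ := ZMod.unitOfCoprime b hab.symm with hua
  set xb : ZMod b := (↑ub⁻¹ : ZMod b) * (N : ZMod b) with hxb
  set yb : ZMod b := (↑ub⁻¹ : ZMod b) * (-(c : ZMod b)) with hyb
  set xa : ZMod a := (↑ua⁻¹ : ZMod a) * (N : ZMod a) with hxa
  set ya : ZMod a := (↑ua⁻¹ : ZMod a) * (-(c : ZMod a)) with hya
  have hyb_unit : IsUnit yb := by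
    rw [hyb]
    exact ((ub⁻¹).isUnit).mul (ZMod.unitOfCoprime c hbc.symm).isUnit.neg
  have hya_unit : IsUnit ya := by
    rw [hya]
    exact ((ua⁻¹).isUnit).mul (ZMod.unitOfCoprime c hac.symm).isUnit.neg
  set p : ℕ → ℕ := g xb yb with hp
  set q : ℕ → ℕ := g xa ya with hq
  -- key congruences
  have hpb : ∀ j : ℕ, ((a * p j : ℕ) : ZMod b) = ((N : ZMod b) - (j : ZMod b) * (c : ZMod b)) := by
    intro j
    have hval : ((p j : ℕ) : ZMod b) = xb + (j : ZMod b) * yb := ZMod.natCast_rightInverse _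
    push_cast
    rw [hval, hxb, hyb]
    have hu : (a : ZMod b) * (↑ub⁻¹ : ZMod b) = 1 := by
      rw [hub, ← ZMod.coe_unitOfCoprime a hab, Units.mul_inv]
    calc (a : ZMod b) * ((↑ub⁻¹ : ZMod b) * (N : ZMod b) + (j : ZMod b) * ((↑ub⁻¹ : ZMod b) * (-(c : ZMod b))))
        = ((a : ZMod b) * (↑ub⁻¹ : ZMod b)) * ((N : ZMod b) - (j : ZMod b) * (c : ZMod b)) := by ring
      _ = (N : ZMod b) - (j : ZMod b) * (c : ZMod b) := by rw [hu, one_mul]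
  have hqa : ∀ j : ℕ, ((b * q j : ℕ) : ZMod a) = ((N : ZMod a) - (j : ZMod a) * (c : ZMod a)) := by
    intro j
    have hval : ((q j : ℕ) : ZMod a) = xa + (j : ZMod a) * ya := ZMod.natCast_rightInverse _
    push_cast
    rw [hval, hxa, hya]
    have hu : (b : ZMod a) * (↑ua⁻¹ : ZMod a) = 1 := by
      rw [hua, ← ZMod.coe_unitOfCoprime b hab.symm, Units.mul_inv]
    calc (b : ZMod a) * ((↑ua⁻¹ : ZMod a) * (N : ZMod a) + (j : ZMod a) * ((↑ua⁻¹ : ZMod a) * (-(c : ZMod a))))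
        = ((b : ZMod a) * (↑ua⁻¹ : ZMod a)) * ((N : ZMod a) - (j : ZMod a) * (c : ZMod a)) := by ring
      _ = (N : ZMod a) - (j : ZMod a) * (c : ZMod a) := by rw [hu, one_mul]
  -- integer m and divisibility
  set m : ℕ → ℤ := fun j => (N : ℤ) - (j : ℤ) * (c : ℤ) with hm
  have hdvd : ∀ j : ℕ, ((a * b : ℕ) : ℤ) ∣ (m j - (a : ℤ) * (p j : ℤ) - (b : ℤ) * (q j : ℤ)) := by
    intro j
    have hdb : ((b : ℕ) : ℤ) ∣ (m j - (a : ℤ) * (p j : ℤ) - (b : ℤ) * (q j : ℤ)) := by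
      rw [← ZMod.intCast_zmod_eq_zero_iff_dvd, hm]
      have := hpb j
      push_cast at this ⊢
      rw [this, ZMod.natCast_self]
      ring
    have hda : ((a : ℕ) : ℤ) ∣ (m j - (a : ℤ) * (p j : ℤ) - (b : ℤ) * (q j : ℤ)) := by
      rw [← ZMod.intCast_zmod_eq_zero_iff_dvd, hm]
      have := hqa j
      push_cast at this ⊢
      rw [this, ZMod.natCast_self]
      ring
    have hcop : IsCoprime (a : ℤ) (b : ℤ) := by
      rw [Int.isCoprime_iff_gcd_eq_one]
      simpa using hab
    push_cast
    exact hcop.mul_dvd hda hdb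
  set k : ℕ → ℤ := fun j => (m j - (a : ℤ) * (p j : ℤ) - (b : ℤ) * (q j : ℤ)) / ((a * b : ℕ) : ℤ) with hk
  have hkey : ∀ j : ℕ, ((a * b : ℕ) : ℤ) * k j = m j - (a : ℤ) * (p j : ℤ) - (b : ℤ) * (q j : ℤ) := by
    intro j
    exact Int.mul_ediv_cancel' (hdvd j)
  -- notation for the sums
  set SP : ℤ := ∑ j ∈ Finset.range L, (p j : ℤ) with hSP
  set SQ : ℤ := ∑ j ∈ Finset.range L, (q j : ℤ) with hSQ
  set SJ : ℤ := ∑ j ∈ Finset.range L, (j : ℤ) with hSJ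
  set SK : ℤ := ∑ j ∈ Finset.range L, k j with hSK
  have hsum_eq : ((a * b : ℕ) : ℤ) * SK = (L : ℤ) * (N : ℤ) - (c : ℤ) * SJ
      - (a : ℤ) * SP - (b : ℤ) * SQ := by
    rw [hSK, Finset.mul_sum, Finset.sum_congr rfl (fun j _ => hkey j)]
    rw [hm]
    rw [Finset.sum_sub_distrib, Finset.sum_sub_distrib, Finset.sum_sub_distrib]
    rw [Finset.sum_const, Finset.card_range]
    rw [← Finset.sum_mul, ← Finset.mul_sum, ← Finset.mul_sum]
    rw [hSJ, hSP, hSQ]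
    push_cast
    ring
  have hj2 : 2 * SJ = (L : ℤ) * ((L : ℤ) - 1) := by
    have base := Finset.sum_range_id_mul_two L
    have h2 : (∑ x ∈ Finset.range L, (x : ℤ)) * 2 = (L : ℤ) * ((L : ℤ) - 1) := by
      rcases Nat.eq_zero_or_pos L with hL0 | hL
      · rw [hL0]; simp
      · have hcast := congrArg (Nat.cast : ℕ → ℤ) base
        push_cast [Nat.cast_sub hL] at hcast
        linarith [hcast]
    rw [hSJ]
    linarith [h2]
  have hP8 : 8 * SP ≤ 4 * (L : ℤ) * ((b : ℤ) - 1) + (b : ℤ) ^ 2 := by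
    have := g_sum_le xb yb hyb_unit L
    rw [hSP, ← hp] at *
    have hcast : ((∑ j ∈ Finset.range L, p j : ℕ) : ℤ) = ∑ j ∈ Finset.range L, (p j : ℤ) := by
      push_cast; rfl
    calc 8 * ∑ j ∈ Finset.range L, (p j : ℤ)
        = ((8 * ∑ j ∈ Finset.range L, p j : ℕ) : ℤ) := by push_cast; ring
      _ ≤ ((4 * L * (b - 1) + b ^ 2 : ℕ) : ℤ) := by exact_mod_cast this
      _ ≤ 4 * (L : ℤ) * ((b : ℤ) - 1) + (b : ℤ) ^ 2 := by
          push_cast [Nat.cast_sub hb]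
          ring_nf
          omega
  have hQ8 : 8 * SQ ≤ 4 * (L : ℤ) * ((a : ℤ) - 1) + (a : ℤ) ^ 2 := by
    have := g_sum_le xa ya hya_unit L
    rw [hSQ, ← hq] at *
    have hcast : ((∑ j ∈ Finset.range L, q j : ℕ) : ℤ) = ∑ j ∈ Finset.range L, (q j : ℤ) := by
      push_cast; rfl
    calc 8 * ∑ j ∈ Finset.range L, (q j : ℤ)
        = ((8 * ∑ j ∈ Finset.range L, q j : ℕ) : ℤ) := by push_cast; ring
      _ ≤ ((4 * L * (a - 1) + a ^ 2 : ℕ) : ℤ) := by exact_mod_cast this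
      _ ≤ 4 * (L : ℤ) * ((a : ℤ) - 1) + (a : ℤ) ^ 2 := by
          push_cast [Nat.cast_sub ha]
          ring_nf
          omega
  -- the quadratic inequality for our choice of L
  have hMZ : (M : ℤ) = 2 * (N : ℤ) + ((a : ℤ) + b + c) := by rw [hM]; push_cast; ring
  have hML1 : -(c : ℤ) ≤ (M : ℤ) - 2 * c * L := by
    have : ((2 * c * L : ℕ) : ℤ) ≤ ((M + c : ℕ) : ℤ) := by exact_mod_cast hL1
    push_cast at this
    linarith
  have hML2 : (M : ℤ) - 2 * c * L ≤ (c : ℤ) := by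
    have : ((M + c : ℕ) : ℤ) < ((2 * c * L + 2 * c : ℕ) : ℤ) := by exact_mod_cast hL2
    push_cast at this
    linarith
  have hMsq : (a * b * c : ℤ) * ((a : ℤ) + b + c) < (M : ℤ) ^ 2 := by
    exact_mod_cast h
  have hH : (a : ℤ) * b * ((a : ℤ) + b) < 4 * (L : ℤ) * M - 4 * c * (L : ℤ) ^ 2 := by
    apply arith1
    · exact_mod_cast hc
    · have : (1 : ℕ) ≤ a * b := Nat.one_le_iff_ne_zero.mpr (by positivity)
      exact_mod_cast this
    · exact hML1
    · exact hML2
    · exact_mod_cast hMsq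
  -- exists j < L with k j ≥ 0
  have hex : ∃ j ∈ Finset.range L, 0 ≤ k j := by
    by_contra hcon
    push_neg at hcon
    have hsumk : SK ≤ - (L : ℤ) := by
      rw [hSK]
      calc ∑ j ∈ Finset.range L, k j ≤ ∑ _j ∈ Finset.range L, (-1 : ℤ) :=
        Finset.sum_le_sum (fun j hj => by have := hcon j hj; omega)
      _ = - (L : ℤ) := by simp
    refine arith2 (a : ℤ) (b : ℤ) (c : ℤ) (L : ℤ) (M : ℤ) (N : ℤ) SP SQ SJ SK
      (by exact_mod_cast ha) (by exact_mod_cast hb) ?_ hsumk hP8 hQ8 hj2 hMZ hH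
    rw [← hsum_eq]
    push_cast
    ring
  obtain ⟨j, hjL, hkj⟩ := hex
  refine ⟨p j, q j + a * (k j).toNat, j, ?_⟩
  have htn : ((k j).toNat : ℤ) = k j := Int.toNat_of_nonneg hkj
  have hZ : (N : ℤ) = (a : ℤ) * (p j) + (b : ℤ) * ((q j : ℤ) + (a : ℤ) * (k j)) + (c : ℤ) * j := by
    have := hkey j
    rw [hm] at this
    push_cast at this ⊢
    linarith [this]
  rw [← htn] at hZ
  exact_mod_cast hZ

end FrobeniusAux

/-- The original upper bound `UB₂` of Beck et al. -/
noncomputable def UB₂ (a₁ a₂ a₃ : ℝ) : ℝ :=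
  (1 / 2) * (Real.sqrt (a₁ * a₂ * a₃ * (a₁ + a₂ + a₃)) - a₁ - a₂ - a₃)

/-- Let `n ≥ 3` and let `a 1 ≤ a 2 ≤ ⋯ ≤ a n` be pairwise coprime positive
integers. Then every integer `b > UB₂ (a 1) (a 2) (a 3)` is a nonnegative
integral combination of the `a i`; that is, `F(a) ≤ UB₂ (a 1) (a 2) (a 3)`. -/
theorem frobenius_le_UB₂ (n : ℕ) (hn : 3 ≤ n) (a : Fin n → ℕ)
    (hpos : ∀ i, 0 < a i) (hmono : Monotone a)
    (hcop : ∀ i j, i ≠ j → Nat.gcd (a i) (a j) = 1) :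
    ∀ b : ℤ, (b : ℝ) > UB₂ (a ⟨0, by omega⟩ : ℕ) (a ⟨1, by omega⟩ : ℕ) (a ⟨2, by omega⟩ : ℕ) →
      ∃ x : Fin n → ℕ, b = ∑ i, (a i : ℤ) * (x i : ℤ) := by
  intro b hb
  set i0 : Fin n := ⟨0, by omega⟩ with hi0
  set i1 : Fin n := ⟨1, by omega⟩ with hi1
  set i2 : Fin n := ⟨2, by omega⟩ with hi2
  set A : ℕ := a i0 with hA
  set B : ℕ := a i1 with hB
  set C : ℕ := a i2 with hC
  have h01 : i0 ≠ i1 := by simp [hi0, hi1, Fin.ext_iff]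
  have h02 : i0 ≠ i2 := by simp [hi0, hi2, Fin.ext_iff]
  have h12 : i1 ≠ i2 := by simp [hi1, hi2, Fin.ext_iff]
  have hab : Nat.Coprime A B := hcop i0 i1 h01
  have hac : Nat.Coprime A C := hcop i0 i2 h02
  have hbc : Nat.Coprime B C := hcop i1 i2 h12
  have hA1 : 1 ≤ A := hpos i0
  have hB1 : 1 ≤ B := hpos i1
  have hC1 : 1 ≤ C := hpos i2
  -- the radicand
  set s : ℕ := A + B + C with hs
  have hX0 : (0:ℝ) ≤ (A:ℝ) * B * C * ((A:ℝ) + B + C) := by positivity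
  have hs3 : 3 ≤ s := by omega
  -- UB₂ ≥ -1, so b ≥ 0
  have hA1' : (1:ℝ) ≤ (A:ℝ) := by exact_mod_cast hA1
  have hB1' : (1:ℝ) ≤ (B:ℝ) := by exact_mod_cast hB1
  have hC1' : (1:ℝ) ≤ (C:ℝ) := by exact_mod_cast hC1
  have hsr : ((s:ℝ)) = (A:ℝ) + B + C := by rw [hs]; push_cast; ring
  have habc : (s:ℝ) - 2 ≤ (A:ℝ) * B * C := by
    have p1 : (0:ℝ) ≤ ((A:ℝ) - 1) * ((B:ℝ) - 1) := by nlinarith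
    have p2 : (0:ℝ) ≤ ((A:ℝ) * (B:ℝ) - 1) * ((C:ℝ) - 1) := by nlinarith
    nlinarith [p1, p2]
  have hkeyr : ((s:ℝ) - 2) ^ 2 ≤ (A:ℝ) * B * C * ((A:ℝ) + B + C) := by
    have h0 : (0:ℝ) ≤ (s:ℝ) - 2 := by
      have : (3:ℝ) ≤ (s:ℝ) := by exact_mod_cast hs3
      linarith
    have e3 : (A:ℝ) * B * C * ((A:ℝ) + B + C) = (A:ℝ) * B * C * (s:ℝ) := by rw [hsr]
    have hABC0 : (0:ℝ) ≤ (A:ℝ) * B * C := by positivity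
    nlinarith [mul_le_mul_of_nonneg_right habc h0, e3, hABC0]
  have hsqlb : ((s:ℝ) - 2) ≤ Real.sqrt ((A:ℝ) * B * C * ((A:ℝ) + B + C)) :=
    Real.le_sqrt_of_sq_le hkeyr
  have hUB : (-1 : ℝ) ≤ UB₂ (A : ℕ) (B : ℕ) (C : ℕ) := by
    unfold UB₂
    linarith [hsqlb, hsr]
  have hb0 : 0 ≤ b := by
    by_contra hneg
    push_neg at hneg
    have : (b : ℝ) ≤ -1 := by exact_mod_cast (by omega : b ≤ -1)
    linarith [hb, hUB]
  set N : ℕ := b.toNat with hN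
  have hbN : (b : ℝ) = (N : ℝ) := by
    rw [hN]
    exact_mod_cast (Int.toNat_of_nonneg hb0).symm
  -- key inequality
  have hmain : (A * B * C) * s < (2 * N + s) ^ 2 := by
    have h1 : Real.sqrt ((A:ℝ) * B * C * ((A:ℝ) + B + C)) < 2 * (N:ℝ) + s := by
      unfold UB₂ at hb
      rw [hbN] at hb
      linarith [hb, hsr]
    have h2 : (A:ℝ) * B * C * ((A:ℝ) + B + C) < (2 * (N:ℝ) + s) ^ 2 := by
      rw [← Real.sq_sqrt hX0]
      exact pow_lt_pow_left₀ h1 (Real.sqrt_nonneg _) (by norm_num)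
    have h2' : (A:ℝ) * B * C * (s:ℝ) < (2 * (N:ℝ) + (s:ℝ)) ^ 2 := by
      rw [hsr] at h2 ⊢
      exact h2
    exact_mod_cast h2'
  obtain ⟨x, y, z, hxyz⟩ := three_coprime_rep A B C N hA1 hB1 hC1 hab hac hbc hmain
  refine ⟨fun i => (if i = i0 then x else 0) + (if i = i1 then y else 0) + (if i = i2 then z else 0), ?_⟩
  have hsum : ∑ i, (a i : ℤ) *
      (((if i = i0 then x else 0) + (if i = i1 then y else 0) + (if i = i2 then z else 0) : ℕ) : ℤ)
      = (A : ℤ) * x + (B : ℤ) * y + (C : ℤ) * z := by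
    have expand : ∀ i : Fin n, (a i : ℤ) *
        (((if i = i0 then x else 0) + (if i = i1 then y else 0) + (if i = i2 then z else 0) : ℕ) : ℤ)
        = (if i = i0 then (a i : ℤ) * x else 0) + (if i = i1 then (a i : ℤ) * y else 0)
          + (if i = i2 then (a i : ℤ) * z else 0) := by
      intro i
      by_cases e0 : i = i0
      · subst e0
        simp only [if_pos rfl, if_neg h01, if_neg h02]
        push_cast
        ring
      · by_cases e1 : i = i1
        · subst e1
          simp only [if_pos rfl, if_neg e0, if_neg h12]
          push_cast
          ring
        · by_cases e2 : i = i2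
          · subst e2
            simp only [if_pos rfl, if_neg e0, if_neg e1]
            push_cast
            ring
          · simp only [if_neg e0, if_neg e1, if_neg e2]
            push_cast
            ring
    rw [Finset.sum_congr rfl (fun i _ => expand i)]
    rw [Finset.sum_add_distrib, Finset.sum_add_distrib]
    rw [Finset.sum_ite_eq' Finset.univ i0 (fun i => (a i : ℤ) * x),
        Finset.sum_ite_eq' Finset.univ i1 (fun i => (a i : ℤ) * y),
        Finset.sum_ite_eq' Finset.univ i2 (fun i => (a i : ℤ) * z)]
    simp [hA, hB, hC]
  rw [hsum]
  have : (N : ℤ) = (A : ℤ) * x + (B : ℤ) * y + (C : ℤ) * z := by exact_mod_cast hxyz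
  rw [← this, hN]
  exact (Int.toNat_of_nonneg hb0).symm
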